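/- arXiv:1811.04372 — 2 statements merged into one kernel-verified Lean document; each statement's English description precedes it below -/
import Mathlib

section
/- Let δ : k[∂]/(∂^p) act trivially. For a p-DG cellular algebra A, every simple graded A-module admits a p-DG module structure; more precisely, the radical of the bilinear form on each cell module Δ(λ) is closed under the differential, so the quotient L(λ) = Δ(λ)/rad Δ(λ) inherits a p-DG structure. -/
open TensorProduct

/-- For a `p`-DG cellular algebra `A` over a field `k` of characteristic `p > 0`
(so that each cell ideal `J ≅ Δ ⊗ Δ°` is stable under the differential and the
isomorphism `φ` is a map of `p`-DG bimodules), every simple module admits a `p`-DG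
structure; more precisely, the radical of the bilinear form on each cell module `Δ` is
closed under the differential `d`, so the quotient `L = Δ / rad Δ` inherits a `p`-DG
structure. -/
theorem pdg_cellular_radical_differential_stable
    {k : Type*} [Field k] {p : ℕ} (hp : 0 < p) [CharP k p]
    {A : Type*} [Ring A] [Algebra k A]
    {Δ : Type*} [AddCommGroup Δ] [Module k Δ] [Module A Δ] [IsScalarTower k A Δ]
    -- the anti-involution
    (σ : A →ₗ[k] A) (hσmul : ∀ a b : A, σ (a * b) = σ b * σ a) (hσinv : ∀ a : A, σ (σ a) = a)
    -- the p-differential on A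
    (der : Module.End k A) (hLeib : ∀ a b : A, der (a * b) = der a * b + a * der b)
    (hderp : der ^ p = 0)
    -- the ∂-stable, σ-stable cell ideal J
    (J : Submodule k A)
    (hJl : ∀ a : A, ∀ x ∈ J, a * x ∈ J) (hJr : ∀ a : A, ∀ x ∈ J, x * a ∈ J)
    (hJσ : ∀ x ∈ J, σ x ∈ J) (hJder : ∀ x ∈ J, der x ∈ J)
    -- the p-DG module structure on the cell module Δ
    (d : Module.End k Δ) (hdp : d ^ p = 0)
    (hdmod : ∀ (a : A) (x : Δ), d (a • x) = der a • x + a • d x)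
    -- the p-DG bimodule isomorphism φ : Δ ⊗ Δ° ≅ J
    (φ : Δ ⊗[k] Δ →ₗ[k] A)
    (hφinj : Function.Injective φ) (hφrange : LinearMap.range φ = J)
    (hφleft : ∀ (a : A) (x y : Δ), φ ((a • x) ⊗ₜ[k] y) = a * φ (x ⊗ₜ[k] y))
    (hφright : ∀ (a : A) (x y : Δ), φ (x ⊗ₜ[k] (σ a • y)) = φ (x ⊗ₜ[k] y) * a)
    (hφflip : ∀ x y : Δ, σ (φ (x ⊗ₜ[k] y)) = φ (y ⊗ₜ[k] x))
    (hφd : ∀ x y : Δ, der (φ (x ⊗ₜ[k] y)) = φ (d x ⊗ₜ[k] y) + φ (x ⊗ₜ[k] d y))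
    -- the bilinear form and its characterization
    (B : Δ → Δ → k)
    (hB : ∀ x y z : Δ, B x y • z = φ (z ⊗ₜ[k] x) • y) :
    ∀ x : Δ, (∀ y : Δ, B x y = 0) → ∀ y : Δ, B (d x) y = 0 := by
  intro x hx y
  have key : ∀ z : Δ, B (d x) y • z = 0 := by
    intro z
    have h1 := congrArg d (hB x y z)
    rw [map_smul, hdmod, hφd, add_smul, ← hB x y (d z), ← hB (d x) y z,
      ← hB x (d y) z, hx (d y), zero_smul, add_zero] at h1
    have : B (d x) y • z = B x y • d z - B x y • d z := by
      nth_rewrite 1 [h1]; abel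
    simpa using this
  by_cases hz : ∃ z : Δ, z ≠ 0
  · obtain ⟨z, hz⟩ := hz
    rcases smul_eq_zero.mp (key z) with h | h
    · exact h
    · exact absurd h hz
  · push_neg at hz
    have hx0 : x = 0 := hz x
    have : d x = x := by rw [hx0, map_zero]
    rw [this]; exact hx y
end

section
/- For two NH_n^l-multipartitions α, β ∈ P_n^l, there is an explicit bijection between Tab^α(β) (the set of fillings of β by {1,…,n} that dominate the standard filling t^α) and Tab_β(α) (the set of fillings of α dominated by the standard filling t^β). In particular |Tab^α(β)| = |Tab_β(α)|, and both sets are nonempty if and only if β ≤ α in dominance order (when comparing standard tableaux). -/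
/-! Tableaux combinatorics for `NH_n^l`-multipartitions.  A multipartition
`μ ∈ P_n^l` is encoded by its standard tableau: the strictly monotone function
`s : Fin n → Fin l` listing the positions of the `n` boxes of `μ` in increasing order
(so `Set.range s` is the support of `μ`).  A `μ`-tableau is then an injective function
`f : Fin n → Fin l` with `Set.range f = Set.range s`, recording the position of each
entry `1, …, n`.  A tableau `f` dominates a tableau `g` (written `f ≥ g`) iff each entry
of `f` appears weakly to the left of the same entry of `g`, i.e. `f m ≤ g m` for all
`m`. -/

/-- `f` is a tableau of the shape whose standard tableau is `s`. -/
def IsTabOfShape {l n : ℕ} (s f : Fin n → Fin l) : Prop :=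
  Function.Injective f ∧ Set.range f = Set.range s

namespace TabProofAux

/-- Any tableau of shape `s` is `s` composed with a permutation. -/
noncomputable def tabEquivPerm {l n : ℕ} (s : Fin n → Fin l) (hs : Function.Injective s)
    (P : (Fin n → Fin l) → Prop) :
    {f : Fin n → Fin l // IsTabOfShape s f ∧ P f} ≃
      {σ : Equiv.Perm (Fin n) // P (s ∘ σ)} where
  toFun f :=
    ⟨(Equiv.ofInjective _ f.2.1.1).trans ((Equiv.setCongr f.2.1.2).trans
        (Equiv.ofInjective s hs).symm), by
      have hfun : s ∘ ((Equiv.ofInjective _ f.2.1.1).trans ((Equiv.setCongr f.2.1.2).trans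
          (Equiv.ofInjective s hs).symm)) = (f : Fin n → Fin l) := by
        funext m
        simp [Equiv.apply_ofInjective_symm]
      rw [hfun]; exact f.2.2⟩
  invFun σ := ⟨s ∘ σ.1, ⟨⟨hs.comp σ.1.injective, by
      simp [Set.range_comp, Set.range_eq_univ.2 σ.1.surjective]⟩, σ.2⟩⟩
  left_inv f := by
    ext m
    simp [Equiv.apply_ofInjective_symm]
  right_inv σ := by
    apply Subtype.ext
    apply Equiv.ext
    intro m
    apply hs
    simp [Equiv.apply_ofInjective_symm]

lemma key {l n : ℕ} {sα sβ : Fin n → Fin l} (hα : Monotone sα) (hβ : Monotone sβ)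
    (σ : Equiv.Perm (Fin n)) (h : ∀ m, sβ (σ m) ≤ sα m) : ∀ m, sβ m ≤ sα m := by
  intro m
  obtain ⟨k, hk, hk2⟩ : ∃ k, k ≤ m ∧ m ≤ σ k := by
    by_contra hcon
    push_neg at hcon
    have hmaps : ∀ k ∈ Finset.Iic m, σ k ∈ Finset.Iio m := fun k hk => by
      simp only [Finset.mem_Iic] at hk
      simp only [Finset.mem_Iio]
      exact hcon k hk
    have hcard := Finset.card_le_card_of_injOn σ hmaps σ.injective.injOn
    rw [Fin.card_Iic, Fin.card_Iio] at hcard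
    omega
  calc sβ m ≤ sβ (σ k) := hβ hk2
    _ ≤ sα k := h k
    _ ≤ sα m := hα hk

end TabProofAux

/-- For two `NH_n^l`-multipartitions `α, β ∈ P_n^l` (encoded by their standard tableaux
`sα`, `sβ`), there is a bijection between `Tab^α(β)` (the set of fillings of `β`
dominating the standard filling `t^α`, i.e. tableaux `f` of shape `β` with `f m ≤ sα m`
for all `m`) and `Tab_β(α)` (the set of fillings of `α` dominated by the standard filling
`t^β`, i.e. tableaux `g` of shape `α` with `sβ m ≤ g m` for all `m`).  In particular
`|Tab^α(β)| = |Tab_β(α)|`, and both sets are nonempty if and only if, when comparing the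
standard tableaux, `t^β ≥ t^α`, i.e. `sβ m ≤ sα m` for all `m` (dominance of the
underlying multipartitions). -/
theorem tableaux_bijection_TabUpper_TabLower (l n : ℕ)
    (sα sβ : Fin n → Fin l) (hα : StrictMono sα) (hβ : StrictMono sβ) :
    Nonempty
      ({f : Fin n → Fin l // IsTabOfShape sβ f ∧ ∀ m, f m ≤ sα m} ≃
       {g : Fin n → Fin l // IsTabOfShape sα g ∧ ∀ m, sβ m ≤ g m}) ∧
    ((∃ f : Fin n → Fin l, IsTabOfShape sβ f ∧ ∀ m, f m ≤ sα m) ↔ ∀ m, sβ m ≤ sα m) ∧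
    ((∃ g : Fin n → Fin l, IsTabOfShape sα g ∧ ∀ m, sβ m ≤ g m) ↔ ∀ m, sβ m ≤ sα m) := by
  have e1 := TabProofAux.tabEquivPerm sβ hβ.injective (fun f => ∀ m, f m ≤ sα m)
  have e2 := TabProofAux.tabEquivPerm sα hα.injective (fun g => ∀ m, sβ m ≤ g m)
  have emid : {σ : Equiv.Perm (Fin n) // ∀ m, (sβ ∘ σ) m ≤ sα m} ≃
      {σ : Equiv.Perm (Fin n) // ∀ m, sβ m ≤ (sα ∘ σ) m} :=
    { toFun := fun σ => ⟨σ.1⁻¹, fun m => by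
        have := σ.2 (σ.1⁻¹ m)
        simpa using this⟩
      invFun := fun σ => ⟨σ.1⁻¹, fun m => by
        have := σ.2 (σ.1⁻¹ m)
        simpa using this⟩
      left_inv := fun σ => by simp
      right_inv := fun σ => by simp }
  refine ⟨⟨e1.trans (emid.trans e2.symm)⟩, ?_, ?_⟩
  · constructor
    · rintro ⟨f, hf⟩
      obtain ⟨σ, hσ⟩ := e1 ⟨f, hf⟩
      exact TabProofAux.key hα.monotone hβ.monotone σ hσ
    · intro h
      exact ⟨sβ, ⟨hβ.injective, rfl⟩, h⟩
  · constructor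
    · rintro ⟨g, hg⟩
      obtain ⟨τ, hτ⟩ := e2 ⟨g, hg⟩
      refine TabProofAux.key hα.monotone hβ.monotone τ⁻¹ (fun m => ?_)
      have := hτ (τ⁻¹ m)
      simpa using this
    · intro h
      exact ⟨sα, ⟨hα.injective, rfl⟩, fun m => h m⟩
end
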